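/- Let Δ be a fan in a lattice N, L ⊆ N a primitive sublattice, and let P : (N,Δ) → (Ñ,Δ̃) be the projection defining the quotient fan Δ̃ of Δ by L, with maximal cones τ₁, …, τ_r of Δ̃. For each i set σᵢ := conv{ ρ ∈ Δ^(1) : P^ℝ(ρ) ⊆ τᵢ }, where Δ^(1) is the set of rays of Δ. Let V be the maximal linear subspace contained in ⋂_{i=1}^r σᵢ, set L' := V ∩ N, and let G : N → N̄ := N/L' be the projection. Then G^ℝ(σ₁), …, G^ℝ(σ_r) are the maximal cones of a fan Δ̄ in N̄, and G defines a map of fans from (N,Δ) to (N̄,Δ̄). -/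

import Mathlib

open Set

/-- The coercion of an integral vector in `ℤ^n` to a real vector in `ℝ^n`. -/
def toR {n : ℕ} (v : Fin n → ℤ) : Fin n → ℝ := fun i => (v i : ℝ)

/-- The scalar extension `F^ℝ : N^ℝ → N'^ℝ` of a `ℤ`-linear map `F : N → N'`,
where `N = ℤ^n`, `N' = ℤ^m`. -/
noncomputable def extR {n m : ℕ} (F : (Fin n → ℤ) →ₗ[ℤ] (Fin m → ℤ)) :
    (Fin n → ℝ) →ₗ[ℝ] (Fin m → ℝ) :=
  (Matrix.of fun i j => ((F (Pi.single j 1)) i : ℝ)).mulVecLin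

/-- A convex cone: a subset containing `0` that is closed under addition and
under multiplication by nonnegative scalars. -/
def IsCone {V : Type*} [AddCommGroup V] [Module ℝ V] (σ : Set V) : Prop :=
  0 ∈ σ ∧ (∀ x ∈ σ, ∀ y ∈ σ, x + y ∈ σ) ∧ ∀ c : ℝ, 0 ≤ c → ∀ x ∈ σ, c • x ∈ σ

/-- The convex-cone hull of a set: the smallest convex cone containing it. -/
def coneHull {V : Type*} [AddCommGroup V] [Module ℝ V] (s : Set V) : Set V :=
  ⋂₀ {σ | IsCone σ ∧ s ⊆ σ}

/-- A rational polyhedral cone in `ℝ^n`: a convex cone generated by finitely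
many vectors of the lattice `ℤ^n`. -/
def IsRatCone {n : ℕ} (σ : Set (Fin n → ℝ)) : Prop :=
  ∃ s : Finset (Fin n → ℤ), σ = coneHull (toR '' ↑s)

/-- A cone is strictly convex if it contains no nonzero linear subspace,
equivalently `σ ∩ (-σ) = {0}`. -/
def IsStrictlyConvexCone {V : Type*} [AddCommGroup V] [Module ℝ V] (σ : Set V) : Prop :=
  ∀ x ∈ σ, -x ∈ σ → x = 0

/-- `τ` is a face of the convex cone `σ`: a subcone such that whenever
`x, y ∈ σ` and `x + y ∈ τ`, then `x, y ∈ τ`. -/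
def IsFaceOf {V : Type*} [AddCommGroup V] [Module ℝ V] (τ σ : Set V) : Prop :=
  IsCone τ ∧ τ ⊆ σ ∧ ∀ x ∈ σ, ∀ y ∈ σ, x + y ∈ τ → x ∈ τ ∧ y ∈ τ

/-- A system of `N`-cones: a finite set of rational polyhedral cones in `ℝ^n`. -/
def IsConeSystem {n : ℕ} (S : Set (Set (Fin n → ℝ))) : Prop :=
  S.Finite ∧ ∀ σ ∈ S, IsRatCone σ

/-- A quasifan: a finite set of rational polyhedral cones, closed under taking
faces, in which any two cones intersect in a common face. -/
def IsQuasifan {n : ℕ} (Δ : Set (Set (Fin n → ℝ))) : Prop :=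
  IsConeSystem Δ ∧ (∀ σ ∈ Δ, ∀ τ, IsFaceOf τ σ → τ ∈ Δ) ∧
    ∀ σ ∈ Δ, ∀ σ' ∈ Δ, IsFaceOf (σ ∩ σ') σ

/-- A fan: a quasifan all of whose cones are strictly convex. -/
def IsFan {n : ℕ} (Δ : Set (Set (Fin n → ℝ))) : Prop :=
  IsQuasifan Δ ∧ ∀ σ ∈ Δ, IsStrictlyConvexCone σ

/-- `F` defines a map of systems of cones (in particular of (quasi-)fans):
every cone of `S` is mapped by `F^ℝ` into some cone of `S'`. -/
def IsConeMap {n m : ℕ} (F : (Fin n → ℤ) →ₗ[ℤ] (Fin m → ℤ))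
    (S : Set (Set (Fin n → ℝ))) (S' : Set (Set (Fin m → ℝ))) : Prop :=
  ∀ σ ∈ S, ∃ τ ∈ S', extR F '' σ ⊆ τ

/-- A sublattice `L ⊆ ℤ^n` is primitive if the quotient `ℤ^n/L` is
torsion-free. -/
def IsPrimitive {n : ℕ} (L : Submodule ℤ (Fin n → ℤ)) : Prop :=
  ∀ (v : Fin n → ℤ) (k : ℤ), k ≠ 0 → k • v ∈ L → v ∈ L

/-- The set of maximal cones of a system of cones. -/
def maxCones {n : ℕ} (Δ : Set (Set (Fin n → ℝ))) : Set (Set (Fin n → ℝ)) :=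
  {σ ∈ Δ | ∀ τ ∈ Δ, σ ⊆ τ → σ = τ}

/-- `ρ` is a ray (one-dimensional cone) of `Δ`. -/
def IsRay {n : ℕ} (Δ : Set (Set (Fin n → ℝ))) (ρ : Set (Fin n → ℝ)) : Prop :=
  ρ ∈ Δ ∧ Module.finrank ℝ (Submodule.span ℝ ρ) = 1

/-- `Δt`, together with the surjection `P : ℤ^n → ℤ^m` onto the quotient of
`ℤ^n` by the primitive sublattice `L̂ = ker P ⊇ L`, is the quotient fan of the
system of cones `S` by `L`: the projection `P` defines a map of systems of
cones from `S` to the fan `Δt` and every map of systems of cones `F` from `S`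
to a fan with `F(L) = 0` factors through `P` via a map of fans. -/
def IsQuotientFan {n m : ℕ} (S : Set (Set (Fin n → ℝ))) (L : Submodule ℤ (Fin n → ℤ))
    (P : (Fin n → ℤ) →ₗ[ℤ] (Fin m → ℤ)) (Δt : Set (Set (Fin m → ℝ))) : Prop :=
  Function.Surjective P ∧ L ≤ LinearMap.ker P ∧ IsPrimitive (LinearMap.ker P) ∧
  IsFan Δt ∧ IsConeMap P S Δt ∧
  ∀ (k : ℕ) (F : (Fin n → ℤ) →ₗ[ℤ] (Fin k → ℤ)) (Δ' : Set (Set (Fin k → ℝ))),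
    IsFan Δ' → IsConeMap F S Δ' → L ≤ LinearMap.ker F →
    ∃ Ft : (Fin m → ℤ) →ₗ[ℤ] (Fin k → ℤ), IsConeMap Ft Δt Δ' ∧ F = Ft.comp P

section ConeBasics

variable {W : Type*} [AddCommGroup W] [Module ℝ W]

theorem isCone_coneHull (s : Set W) : IsCone (coneHull s) := by
  refine ⟨?_, ?_, ?_⟩
  · exact fun t ht => ht.1.1
  · intro x hx y hy t ht
    exact ht.1.2.1 x (hx t ht) y (hy t ht)
  · intro c hc x hx t ht
    exact ht.1.2.2 c hc x (hx t ht)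

theorem subset_coneHull (s : Set W) : s ⊆ coneHull s :=
  fun x hx t ht => ht.2 hx

theorem coneHull_min {s σ : Set W} (h : s ⊆ σ) (hσ : IsCone σ) : coneHull s ⊆ σ :=
  fun _ hx => hx σ ⟨hσ, h⟩

theorem coneHull_mono {s t : Set W} (h : s ⊆ t) : coneHull s ⊆ coneHull t :=
  coneHull_min (h.trans (subset_coneHull t)) (isCone_coneHull t)

theorem IsCone.list_sum {σ : Set W} (hσ : IsCone σ) {l : List W}
    (h : ∀ z ∈ l, z ∈ σ) : l.sum ∈ σ := by
  induction l with
  | nil => simpa using hσ.1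
  | cons a l ih =>
      rw [List.sum_cons]
      exact hσ.2.1 a (h a List.mem_cons_self) l.sum
        (ih fun z hz => h z (List.mem_cons_of_mem a hz))

theorem mem_coneHull {s : Set W} {x : W} :
    x ∈ coneHull s ↔ ∃ l : List W,
      (∀ z ∈ l, ∃ c : ℝ, 0 ≤ c ∧ ∃ v ∈ s, z = c • v) ∧ x = l.sum := by
  constructor
  · intro hx
    refine hx {x : W | ∃ l : List W,
        (∀ z ∈ l, ∃ c : ℝ, 0 ≤ c ∧ ∃ v ∈ s, z = c • v) ∧ x = l.sum}
      ⟨⟨⟨[], by simp, rfl⟩, ?_, ?_⟩, ?_⟩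
    · rintro a ⟨la, hla, rfl⟩ b ⟨lb, hlb, rfl⟩
      refine ⟨la ++ lb, ?_, by rw [List.sum_append]⟩
      intro z hz
      rcases List.mem_append.1 hz with h | h
      exacts [hla z h, hlb z h]
    · rintro c hc a ⟨la, hla, rfl⟩
      refine ⟨la.map (c • ·), ?_, ?_⟩
      · intro z hz
        rcases List.mem_map.1 hz with ⟨w, hw, rfl⟩
        rcases hla w hw with ⟨c', hc', v, hv, rfl⟩
        exact ⟨c * c', mul_nonneg hc hc', v, hv, smul_smul c c' v⟩
      · rw [List.smul_sum]
    · intro v hv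
      exact ⟨[v], by intro z hz; simp at hz; exact ⟨1, zero_le_one, v, hv, by simp [hz]⟩, by simp⟩
  · rintro ⟨l, hl, rfl⟩
    refine (isCone_coneHull s).list_sum fun z hz => ?_
    rcases hl z hz with ⟨c, hc, v, hv, rfl⟩
    exact (isCone_coneHull s).2.2 c hc v (subset_coneHull s hv)

end ConeBasics
section ConeMore

variable {W : Type*} [AddCommGroup W] [Module ℝ W]
variable {W' : Type*} [AddCommGroup W'] [Module ℝ W']

theorem IsCone.inter {σ σ' : Set W} (h : IsCone σ) (h' : IsCone σ') : IsCone (σ ∩ σ') :=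
  ⟨⟨h.1, h'.1⟩, fun x hx y hy => ⟨h.2.1 x hx.1 y hy.1, h'.2.1 x hx.2 y hy.2⟩,
    fun c hc x hx => ⟨h.2.2 c hc x hx.1, h'.2.2 c hc x hx.2⟩⟩

theorem IsCone.image (f : W →ₗ[ℝ] W') {σ : Set W} (h : IsCone σ) : IsCone (f '' σ) := by
  refine ⟨⟨0, h.1, map_zero f⟩, ?_, ?_⟩
  · rintro _ ⟨x, hx, rfl⟩ _ ⟨y, hy, rfl⟩
    exact ⟨x + y, h.2.1 x hx y hy, map_add f x y⟩
  · rintro c hc _ ⟨x, hx, rfl⟩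
    exact ⟨c • x, h.2.2 c hc x hx, map_smul f c x⟩

theorem IsCone.preimage (f : W →ₗ[ℝ] W') {σ : Set W'} (h : IsCone σ) : IsCone (f ⁻¹' σ) := by
  refine ⟨by simp [Set.mem_preimage, map_zero, h.1], ?_, ?_⟩
  · intro x hx y hy
    simpa [Set.mem_preimage, map_add] using h.2.1 _ hx _ hy
  · intro c hc x hx
    simpa [Set.mem_preimage, map_smul] using h.2.2 c hc _ hx

theorem image_coneHull (f : W →ₗ[ℝ] W') (s : Set W) :
    f '' coneHull s = coneHull (f '' s) := by
  apply Set.Subset.antisymm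
  · rintro _ ⟨x, hx, rfl⟩
    have : coneHull s ⊆ f ⁻¹' coneHull (f '' s) := by
      refine coneHull_min ?_ ((isCone_coneHull (f '' s)).preimage f)
      intro v hv
      exact subset_coneHull _ ⟨v, hv, rfl⟩
    exact this hx
  · refine coneHull_min ?_ ((isCone_coneHull s).image f)
    exact Set.image_mono (f := f) (subset_coneHull s)

theorem coneHull_union_coneHull (a b : Set W) :
    coneHull (coneHull a ∪ coneHull b) = coneHull (a ∪ b) := by
  apply Set.Subset.antisymm
  · refine coneHull_min ?_ (isCone_coneHull _)
    exact Set.union_subset (coneHull_mono Set.subset_union_left)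
      (coneHull_mono Set.subset_union_right)
  · exact coneHull_mono (Set.union_subset_union (subset_coneHull a) (subset_coneHull b))

theorem coneHull_union_decomp {a b : Set W} {x : W} (hx : x ∈ coneHull (a ∪ b)) :
    ∃ y ∈ coneHull a, ∃ z ∈ coneHull b, x = y + z := by
  refine hx {x : W | ∃ y ∈ coneHull a, ∃ z ∈ coneHull b, x = y + z} ⟨⟨?_, ?_, ?_⟩, ?_⟩
  · exact ⟨0, (isCone_coneHull a).1, 0, (isCone_coneHull b).1, by simp⟩
  · rintro _ ⟨y, hy, z, hz, rfl⟩ _ ⟨y', hy', z', hz', rfl⟩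
    exact ⟨y + y', (isCone_coneHull a).2.1 y hy y' hy', z + z',
      (isCone_coneHull b).2.1 z hz z' hz', by abel⟩
  · rintro c hc _ ⟨y, hy, z, hz, rfl⟩
    exact ⟨c • y, (isCone_coneHull a).2.2 c hc y hy, c • z,
      (isCone_coneHull b).2.2 c hc z hz, by rw [smul_add]⟩
  · rintro v (hv | hv)
    · exact ⟨v, subset_coneHull a hv, 0, (isCone_coneHull b).1, by simp⟩
    · exact ⟨0, (isCone_coneHull a).1, v, subset_coneHull b hv, by simp⟩

theorem coneHull_singleton (s : W) :
    coneHull {s} = {x : W | ∃ t : ℝ, 0 ≤ t ∧ x = t • s} := by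
  apply Set.Subset.antisymm
  · refine coneHull_min ?_ ⟨⟨0, le_refl _, by simp⟩, ?_, ?_⟩
    · intro v hv
      rcases hv with rfl
      exact ⟨1, zero_le_one, by simp⟩
    · rintro _ ⟨t, ht, rfl⟩ _ ⟨t', ht', rfl⟩
      exact ⟨t + t', by positivity, by rw [add_smul]⟩
    · rintro c hc _ ⟨t, ht, rfl⟩
      exact ⟨c * t, mul_nonneg hc ht, by rw [mul_smul]⟩
  · rintro _ ⟨t, ht, rfl⟩
    exact (isCone_coneHull _).2.2 t ht s (subset_coneHull _ rfl)

theorem IsFaceOf.refl' {σ : Set W} (h : IsCone σ) : IsFaceOf σ σ :=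
  ⟨h, le_refl _, fun x hx y hy _ => ⟨hx, hy⟩⟩

theorem IsFaceOf.trans' {τ κ σ : Set W} (h1 : IsFaceOf τ κ) (h2 : IsFaceOf κ σ) :
    IsFaceOf τ σ := by
  refine ⟨h1.1, h1.2.1.trans h2.2.1, ?_⟩
  intro x hx y hy hxy
  have hκ := h2.2.2 x hx y hy (h1.2.1 hxy)
  exact h1.2.2 x hκ.1 y hκ.2 hxy

theorem face_list_sum {T ω : Set W} (hT : IsCone T) (hω : IsFaceOf ω T)
    {l : List W} (hl : ∀ z ∈ l, z ∈ T) (hs : l.sum ∈ ω) : ∀ z ∈ l, z ∈ ω := by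
  induction l with
  | nil => simp
  | cons a l ih =>
      rw [List.sum_cons] at hs
      have ha : a ∈ T := hl a List.mem_cons_self
      have hsum : l.sum ∈ T := hT.list_sum fun z hz => hl z (List.mem_cons_of_mem a hz)
      have := hω.2.2 a ha l.sum hsum hs
      intro z hz
      rcases List.mem_cons.1 hz with rfl | hz
      · exact this.1
      · exact ih (fun w hw => hl w (List.mem_cons_of_mem a hw)) this.2 z hz

theorem face_coneHull_eq {s : Set W} {κ : Set W} (hκ : IsFaceOf κ (coneHull s)) :
    κ = coneHull (s ∩ κ) := by
  apply Set.Subset.antisymm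
  · intro x hx
    rcases mem_coneHull.1 (hκ.2.1 hx) with ⟨l, hl, rfl⟩
    have hlT : ∀ z ∈ l, z ∈ coneHull s := by
      intro z hz
      rcases hl z hz with ⟨c, hc, v, hv, rfl⟩
      exact (isCone_coneHull s).2.2 c hc v (subset_coneHull s hv)
    have hlω := face_list_sum (isCone_coneHull s) hκ hlT hx
    refine (isCone_coneHull (s ∩ κ)).list_sum fun z hz => ?_
    rcases hl z hz with ⟨c, hc, v, hv, rfl⟩
    rcases eq_or_lt_of_le hc with rfl | hc'
    · simpa using (isCone_coneHull (s ∩ κ)).1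
    · have hvκ : v ∈ κ := by
        have := hκ.1.2.2 c⁻¹ (le_of_lt (inv_pos.2 hc')) _ (hlω _ hz)
        rwa [smul_smul, inv_mul_cancel₀ (ne_of_gt hc'), one_smul] at this
      exact (isCone_coneHull (s ∩ κ)).2.2 c hc v (subset_coneHull _ ⟨hv, hvκ⟩)
  · exact coneHull_min (fun v hv => hv.2) hκ.1

end ConeMore
section ExtR

theorem toR_zero {n : ℕ} : toR (0 : Fin n → ℤ) = 0 := by
  funext i; simp [toR]

theorem extR_apply {n m : ℕ} (F : (Fin n → ℤ) →ₗ[ℤ] (Fin m → ℤ)) (x : Fin n → ℝ) :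
    extR F x = ∑ j, x j • toR (F (Pi.single j 1)) := by
  funext i
  simp only [extR, Matrix.mulVecLin_apply, Matrix.mulVec, dotProduct, Matrix.of_apply]
  rw [Finset.sum_apply]
  refine Finset.sum_congr rfl fun j _ => ?_
  simp [toR, mul_comm]

theorem extR_toR {n m : ℕ} (F : (Fin n → ℤ) →ₗ[ℤ] (Fin m → ℤ)) (v : Fin n → ℤ) :
    extR F (toR v) = toR (F v) := by
  have hv : v = ∑ j, v j • Pi.single j 1 := by
    conv_lhs => rw [← Finset.univ_sum_single v]
    refine Finset.sum_congr rfl fun j _ => ?_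
    funext i
    simp [Pi.single_apply]
  have hFv : F v = ∑ j, v j • F (Pi.single j 1) := by
    conv_lhs => rw [hv]
    rw [map_sum]
    exact Finset.sum_congr rfl fun j _ => map_smul F _ _
  rw [extR_apply]
  funext i
  rw [Finset.sum_apply]
  simp only [toR, hFv, Finset.sum_apply, Pi.smul_apply, smul_eq_mul]
  push_cast
  rfl

theorem extR_comp_apply {n m p : ℕ} (F : (Fin m → ℤ) →ₗ[ℤ] (Fin p → ℤ))
    (F' : (Fin n → ℤ) →ₗ[ℤ] (Fin m → ℤ)) (x : Fin n → ℝ) :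
    extR (F.comp F') x = extR F (extR F' x) := by
  rw [extR_apply F', map_sum, extR_apply (F.comp F')]
  refine Finset.sum_congr rfl fun j _ => ?_
  rw [map_smul, extR_toR]
  rfl

theorem sum_single_real {n : ℕ} (x : Fin n → ℝ) :
    ∑ j, x j • toR (Pi.single j 1 : Fin n → ℤ) = x := by
  have : ∀ j : Fin n, x j • toR (Pi.single j 1 : Fin n → ℤ) = Pi.single j (x j) := by
    intro j
    funext i
    simp [toR, Pi.single_apply]
  simp_rw [this]
  exact Finset.univ_sum_single x

theorem extR_sub_apply {n m : ℕ} (F F' : (Fin n → ℤ) →ₗ[ℤ] (Fin m → ℤ)) (x : Fin n → ℝ) :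
    extR (F - F') x = extR F x - extR F' x := by
  rw [extR_apply, extR_apply, extR_apply, ← Finset.sum_sub_distrib]
  refine Finset.sum_congr rfl fun j _ => ?_
  have : toR ((F - F') (Pi.single j 1)) = toR (F (Pi.single j 1)) - toR (F' (Pi.single j 1)) := by
    funext i; simp [toR]
  rw [this, smul_sub]

theorem extR_id_apply {n : ℕ} (x : Fin n → ℝ) :
    extR (LinearMap.id : (Fin n → ℤ) →ₗ[ℤ] (Fin n → ℤ)) x = x := by
  rw [extR_apply]
  simpa using sum_single_real x

theorem exists_section {n k : ℕ} (G : (Fin n → ℤ) →ₗ[ℤ] (Fin k → ℤ))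
    (hG : Function.Surjective G) :
    ∃ s : (Fin k → ℤ) →ₗ[ℤ] (Fin n → ℤ), ∀ w, G (s w) = w := by
  classical
  choose f hf using fun j : Fin k => hG (Pi.single j 1)
  refine ⟨(Pi.basisFun ℤ (Fin k)).constr ℤ f, fun w => ?_⟩
  have : G.comp ((Pi.basisFun ℤ (Fin k)).constr ℤ f) = LinearMap.id := by
    refine (Pi.basisFun ℤ (Fin k)).ext fun j => ?_
    simp only [LinearMap.comp_apply, Module.Basis.constr_basis, LinearMap.id_apply]
    rw [hf j]
    simp [Pi.basisFun_apply]
  calc G (((Pi.basisFun ℤ (Fin k)).constr ℤ f) w)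
      = (G.comp ((Pi.basisFun ℤ (Fin k)).constr ℤ f)) w := rfl
    _ = w := by rw [this]; rfl

end ExtR
section Rays

variable {W : Type*} [AddCommGroup W] [Module ℝ W] [Module.Finite ℝ W] [DecidableEq W]

theorem ray_struct {ρ : Set W} (hcone : IsCone ρ) (hsc : IsStrictlyConvexCone ρ)
    (hrk : Module.finrank ℝ (Submodule.span ℝ ρ) = 1) {u : W} (hu : u ∈ ρ) (hu0 : u ≠ 0)
    {z : W} (hz : z ∈ ρ) : ∃ t : ℝ, 0 ≤ t ∧ z = t • u := by
  have hle : Submodule.span ℝ {u} ≤ Submodule.span ℝ ρ :=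
    Submodule.span_mono (Set.singleton_subset_iff.2 hu)
  have h1 : Module.finrank ℝ (Submodule.span ℝ {u}) = 1 := finrank_span_singleton hu0
  have heq : Submodule.span ℝ {u} = Submodule.span ℝ ρ := by
    apply Submodule.eq_of_le_of_finrank_le hle
    rw [h1, hrk]
  have hz' : z ∈ Submodule.span ℝ {u} := by
    rw [heq]; exact Submodule.subset_span hz
  rcases Submodule.mem_span_singleton.1 hz' with ⟨t, rfl⟩
  rcases le_or_gt 0 t with ht | ht
  · exact ⟨t, ht, rfl⟩
  · exfalso
    have hneg : -(t • u) ∈ ρ := by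
      have : (-t) • u ∈ ρ := hcone.2.2 (-t) (by linarith) u hu
      rwa [neg_smul] at this
    have := hsc _ hz hneg
    rw [smul_eq_zero] at this
    rcases this with h | h
    · exact absurd h (ne_of_lt ht)
    · exact hu0 h

theorem exists_minimal_genset (A : Finset W) :
    ∃ B : Finset W, B ⊆ A ∧ coneHull (↑B : Set W) = coneHull (↑A : Set W) ∧
      ∀ s ∈ B, s ∉ coneHull (↑(B.erase s) : Set W) := by
  classical
  induction A using Finset.strongInduction with
  | _ A ih =>
    by_cases h : ∃ s ∈ A, s ∈ coneHull ↑(A.erase s)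
    · rcases h with ⟨s, hs, hmem⟩
      rcases ih (A.erase s) (Finset.erase_ssubset hs) with ⟨B, hBsub, hBeq, hBmin⟩
      refine ⟨B, hBsub.trans (Finset.erase_subset s A), ?_, hBmin⟩
      rw [hBeq]
      apply Set.Subset.antisymm (coneHull_mono (by exact_mod_cast Finset.erase_subset s A))
      refine coneHull_min ?_ (isCone_coneHull _)
      intro a ha
      rcases eq_or_ne a s with rfl | hne
      · exact hmem
      · exact subset_coneHull _ (by exact_mod_cast Finset.mem_erase.2 ⟨hne, by exact_mod_cast ha⟩)
    · push_neg at h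
      exact ⟨A, le_refl _, rfl, h⟩

theorem extreme_ray {B : Finset W} (hsc : IsStrictlyConvexCone (coneHull (↑B : Set W)))
    {s : W} (hs : s ∈ B) (hmin : s ∉ coneHull ↑(B.erase s)) :
    IsFaceOf (coneHull {s}) (coneHull (↑B : Set W)) := by
  classical
  have hBeq : (↑B : Set W) = {s} ∪ ↑(B.erase s) := by
    conv_lhs => rw [← Finset.insert_erase hs]
    rw [Finset.coe_insert, Set.insert_eq]
  refine ⟨isCone_coneHull _, coneHull_mono (by simp [hs]), ?_⟩
  intro x hx y hy hxy
  rw [hBeq] at hx hy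
  rcases coneHull_union_decomp hx with ⟨a₁, ha₁, b₁, hb₁, rfl⟩
  rcases coneHull_union_decomp hy with ⟨a₂, ha₂, b₂, hb₂, rfl⟩
  rcases (coneHull_singleton s) ▸ ha₁ with ⟨p, hp, rfl⟩
  rcases (coneHull_singleton s) ▸ ha₂ with ⟨q, hq, rfl⟩
  rcases (coneHull_singleton s) ▸ hxy with ⟨t, ht, hteq⟩
  -- (p•s + b₁) + (q•s + b₂) = t•s  ⟹  b₁ + b₂ = (t - p - q) • s
  have hsum : b₁ + b₂ = (t - p - q) • s := by
    have h2 : b₁ + b₂ = t • s - p • s - q • s := by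
      rw [← hteq]; abel
    rw [h2, sub_smul, sub_smul]
  have hD : IsCone (coneHull (↑(B.erase s) : Set W)) := isCone_coneHull _
  have hbB : b₁ + b₂ ∈ coneHull (↑B : Set W) := by
    have := hD.2.1 b₁ hb₁ b₂ hb₂
    exact coneHull_mono (by exact_mod_cast Finset.erase_subset s B) this
  have hb0 : b₁ + b₂ = 0 := by
    rcases le_or_gt (t - p - q) 0 with hle | hlt
    · -- -(b₁+b₂) = (p+q-t) • s ∈ coneHull B
      have hneg : -(b₁ + b₂) ∈ coneHull (↑B : Set W) := by
        rw [hsum, ← neg_smul]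
        have : -(t - p - q) ≥ 0 := by linarith
        exact (isCone_coneHull _).2.2 _ this s (subset_coneHull _ hs)
      exact hsc _ hbB hneg
    · exfalso
      apply hmin
      have : s = (t - p - q)⁻¹ • (b₁ + b₂) := by
        rw [hsum, smul_smul, inv_mul_cancel₀ (ne_of_gt hlt), one_smul]
      have hmem : (t - p - q)⁻¹ • (b₁ + b₂) ∈ coneHull (↑(B.erase s) : Set W) :=
        hD.2.2 _ (le_of_lt (inv_pos.2 hlt)) _ (hD.2.1 b₁ hb₁ b₂ hb₂)
      rwa [← this] at hmem
  have hb₁B : b₁ ∈ coneHull (↑B : Set W) :=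
    coneHull_mono (by exact_mod_cast Finset.erase_subset s B) hb₁
  have hb₂B : b₂ ∈ coneHull (↑B : Set W) :=
    coneHull_mono (by exact_mod_cast Finset.erase_subset s B) hb₂
  have hb₁0 : b₁ = 0 := by
    apply hsc _ hb₁B
    have h3 : -b₁ = b₂ := by rw [neg_eq_iff_add_eq_zero]; exact hb0
    rw [h3]; exact hb₂B
  have hb₂0 : b₂ = 0 := by rw [← hb0, hb₁0]; abel
  constructor
  · rw [hb₁0, add_zero, coneHull_singleton]
    exact ⟨p, hp, rfl⟩
  · rw [hb₂0, add_zero, coneHull_singleton]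
    exact ⟨q, hq, rfl⟩

theorem exists_ray_decomp' {B : Finset W} (hsc : IsStrictlyConvexCone (coneHull (↑B : Set W))) :
    ∃ T : Set W, coneHull (↑B : Set W) = coneHull T ∧ ∀ v ∈ T, ∃ ρ : Set W,
      IsFaceOf ρ (coneHull (↑B : Set W)) ∧ v ∈ ρ ∧
      Module.finrank ℝ (Submodule.span ℝ ρ) = 1 := by
  rcases exists_minimal_genset B with ⟨B', hB'sub, hB'eq, hB'min⟩
  refine ⟨↑B', hB'eq.symm, ?_⟩
  intro v hv
  have hvB' : v ∈ B' := by exact_mod_cast hv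
  have hmin' : v ∉ coneHull ↑(B'.erase v) := hB'min v hvB'
  have hsc' : IsStrictlyConvexCone (coneHull (↑B' : Set W)) := by rw [hB'eq]; exact hsc
  have hface : IsFaceOf (coneHull {v}) (coneHull (↑B' : Set W)) :=
    extreme_ray hsc' hvB' hmin'
  have hv0 : v ≠ 0 := by
    intro h
    apply hmin'
    rw [h]
    exact (isCone_coneHull _).1
  refine ⟨coneHull {v}, by rw [← hB'eq]; exact hface, subset_coneHull _ rfl, ?_⟩
  have hspan : Submodule.span ℝ (coneHull {v}) = Submodule.span ℝ {v} := by
    apply le_antisymm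
    · rw [Submodule.span_le]
      intro z hz
      rcases (coneHull_singleton v) ▸ hz with ⟨t, _, rfl⟩
      exact Submodule.smul_mem _ t (Submodule.subset_span rfl)
    · exact Submodule.span_mono (subset_coneHull _)
  rw [hspan]
  exact finrank_span_singleton hv0

end Rays
section Aux

variable {W : Type*} [AddCommGroup W] [Module ℝ W]

theorem coneHull_of_isCone {σ : Set W} (h : IsCone σ) : coneHull σ = σ :=
  Set.Subset.antisymm (coneHull_min (le_refl _) h) (subset_coneHull σ)

theorem IsRatCone.isCone {n : ℕ} {σ : Set (Fin n → ℝ)} (h : IsRatCone σ) : IsCone σ := by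
  rcases h with ⟨g, rfl⟩; exact isCone_coneHull _

theorem faces_inter {C C' κ κ' : Set W} (h1 : IsFaceOf κ C) (h2 : IsFaceOf κ' C')
    (hi : IsFaceOf (C ∩ C') C) (hi' : IsFaceOf (C ∩ C') C') :
    IsFaceOf (κ ∩ κ') κ := by
  refine ⟨h1.1.inter h2.1, Set.inter_subset_left, ?_⟩
  intro x hx y hy hxy
  have hxC : x ∈ C := h1.2.1 hx
  have hyC : y ∈ C := h1.2.1 hy
  have hxyCC' : x + y ∈ C ∩ C' := ⟨h1.2.1 hxy.1, h2.2.1 hxy.2⟩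
  have h3 := hi.2.2 x hxC y hyC hxyCC'
  have h4 := h2.2.2 x h3.1.2 y h3.2.2 hxy.2
  exact ⟨⟨hx, h4.1⟩, ⟨hy, h4.2⟩⟩

theorem sUnion_ratcone_hull {n : ℕ} {R : Set (Set (Fin n → ℝ))} (hfin : R.Finite)
    (h : ∀ ρ ∈ R, ∃ g : Finset (Fin n → ℤ), ρ = coneHull (toR '' ↑g)) :
    ∃ g : Finset (Fin n → ℤ), coneHull (⋃₀ R) = coneHull (toR '' ↑g) := by
  classical
  revert h
  refine Set.Finite.induction_on
    (motive := fun R _ => (∀ ρ ∈ R, ∃ g : Finset (Fin n → ℤ), ρ = coneHull (toR '' ↑g)) →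
      ∃ g : Finset (Fin n → ℤ), coneHull (⋃₀ R) = coneHull (toR '' ↑g)) R hfin ?_ ?_
  · exact fun _ => ⟨∅, by simp⟩
  · rintro ρ R ha hfin ih h
    rcases h ρ (Set.mem_insert _ _) with ⟨gρ, hgρ⟩
    rcases ih (fun ρ' hρ' => h ρ' (Set.mem_insert_of_mem _ hρ')) with ⟨gR, hgR⟩
    refine ⟨gρ ∪ gR, ?_⟩
    rw [Set.sUnion_insert]
    calc coneHull (ρ ∪ ⋃₀ R)
        = coneHull (coneHull ρ ∪ coneHull (⋃₀ R)) := (coneHull_union_coneHull _ _).symm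
      _ = coneHull (coneHull (toR '' ↑gρ) ∪ coneHull (toR '' ↑gR)) := by
          rw [hgR, hgρ, coneHull_of_isCone (isCone_coneHull _)]
      _ = coneHull (toR '' ↑gρ ∪ toR '' ↑gR) := coneHull_union_coneHull _ _
      _ = coneHull (toR '' ↑(gρ ∪ gR)) := by rw [← Set.image_union, Finset.coe_union]

end Aux
/-- Let `Δ` be a fan in `N`, `L ⊆ N` a primitive sublattice
and `P : (N,Δ) → (Ñ,Δ̃)` the projection defining the quotient fan `Δ̃` of `Δ`
by `L`, with maximal cones `τ 1, …, τ r` of `Δ̃`. For each `i` let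
`σ i := conv{ρ ∈ Δ^(1) : P^ℝ(ρ) ⊆ τ i}`. Let `V` be the maximal linear
subspace contained in `⋂ᵢ σᵢ`, set `L' := V ∩ N` and let
`G : N → N̄ := N/L'` be the projection. Then `G^ℝ(σ 1), …, G^ℝ(σ r)` are the
maximal cones of a fan `Δ̄` in `N̄` and `G` defines a map of fans from
`(N,Δ)` to `(N̄,Δ̄)`. -/
theorem good_model_fan {n m r : ℕ} (Δ : Set (Set (Fin n → ℝ))) (hΔ : IsFan Δ)
    (L : Submodule ℤ (Fin n → ℤ)) (hL : IsPrimitive L)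
    (P : (Fin n → ℤ) →ₗ[ℤ] (Fin m → ℤ)) (Δt : Set (Set (Fin m → ℝ)))
    (hquot : IsQuotientFan Δ L P Δt)
    (τ : Fin r → Set (Fin m → ℝ)) (hτ : Set.range τ = maxCones Δt)
    (σ : Fin r → Set (Fin n → ℝ))
    (hσ : ∀ i, σ i = coneHull (⋃₀ {ρ | IsRay Δ ρ ∧ extR P '' ρ ⊆ τ i}))
    (V : Submodule ℝ (Fin n → ℝ))
    (hV : (V : Set (Fin n → ℝ)) = {x | (x ∈ ⋂ i, σ i) ∧ (-x ∈ ⋂ i, σ i)})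
    {k : ℕ} (G : (Fin n → ℤ) →ₗ[ℤ] (Fin k → ℤ)) (hGsurj : Function.Surjective G)
    (hGker : ∀ v : Fin n → ℤ, G v = 0 ↔ toR v ∈ V) :
    IsFan {κ | ∃ i, IsFaceOf κ (extR G '' σ i)} ∧
    maxCones {κ | ∃ i, IsFaceOf κ (extR G '' σ i)} =
      Set.range (fun i => extR G '' σ i) ∧
    IsConeMap G Δ {κ | ∃ i, IsFaceOf κ (extR G '' σ i)} := by
  classical
  obtain ⟨hPsurj, hLP, hprim, hΔtfan, hPmap, huniv⟩ := hquot
  -- basic facts about Δt and its maximal cones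
  have hΔtcone : ∀ ω ∈ Δt, IsCone ω := fun ω hω => (hΔtfan.1.1.2 ω hω).isCone
  have hτmaxmem : ∀ i, τ i ∈ maxCones Δt := by
    intro i; rw [← hτ]; exact Set.mem_range_self i
  have hτΔt : ∀ i, τ i ∈ Δt := fun i => (hτmaxmem i).1
  have hτmax : ∀ i, ∀ ω ∈ Δt, τ i ⊆ ω → τ i = ω := fun i => (hτmaxmem i).2
  have hmaxsup : ∀ ω ∈ Δt, ∃ i, ω ⊆ τ i := by
    intro ω hω
    obtain ⟨a, ha, hamax⟩ := Set.Finite.exists_maximalFor id {ω' ∈ Δt | ω ⊆ ω'}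
      (hΔtfan.1.1.1.subset (Set.sep_subset _ _)) ⟨ω, hω, le_refl _⟩
    have hamem : a ∈ maxCones Δt := by
      refine ⟨ha.1, fun t ht hat => ?_⟩
      exact Set.Subset.antisymm hat (hamax ⟨ht, ha.2.trans hat⟩ hat)
    rw [← hτ] at hamem
    rcases hamem with ⟨i, rfl⟩
    exact ⟨i, ha.2⟩
  have hσcone : ∀ i, IsCone (σ i) := fun i => by rw [hσ]; exact isCone_coneHull _
  have hΔcone : ∀ s ∈ Δ, IsCone s := fun s hs => (hΔ.1.1.2 s hs).isCone
  have hPσ : ∀ i, ∀ x ∈ σ i, extR P x ∈ τ i := by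
    intro i x hx
    rw [hσ i] at hx
    have hsub : coneHull (⋃₀ {ρ | IsRay Δ ρ ∧ extR P '' ρ ⊆ τ i}) ⊆ extR P ⁻¹' τ i := by
      refine coneHull_min ?_ ((hΔtcone _ (hτΔt i)).preimage _)
      rintro v ⟨ρ, hρ, hvρ⟩
      exact hρ.2 ⟨v, hvρ, rfl⟩
    exact hsub hx
  have hraysub : ∀ i, ∀ ρ, IsRay Δ ρ → extR P '' ρ ⊆ τ i → ρ ⊆ σ i := by
    intro i ρ h1 h2
    rw [hσ i]
    have hmem : ρ ∈ {ρ | IsRay Δ ρ ∧ extR P '' ρ ⊆ τ i} := ⟨h1, h2⟩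
    exact (Set.subset_sUnion_of_mem hmem).trans (subset_coneHull _)
  -- representation of elements of σ i
  have hrep : ∀ i, ∀ x ∈ σ i, ∃ l : List (Fin n → ℝ),
      (∀ z ∈ l, ∃ ρ, (IsRay Δ ρ ∧ extR P '' ρ ⊆ τ i) ∧ z ∈ ρ) ∧ x = l.sum := by
    intro i x hx
    rw [hσ i] at hx
    rcases mem_coneHull.1 hx with ⟨l, hl, rfl⟩
    refine ⟨l, ?_, rfl⟩
    intro z hz
    rcases hl z hz with ⟨c, hc, v, hv, rfl⟩
    rcases hv with ⟨ρ, hρ, hvρ⟩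
    exact ⟨ρ, hρ, ((hΔ.1.1.2 ρ hρ.1.1).isCone).2.2 c hc v hvρ⟩
  -- the key face lemma at the level of the σ i
  have L1 : ∀ (i j : Fin r), ∀ x y, x ∈ σ i → y ∈ σ i → x + y ∈ σ j →
      x ∈ σ j ∧ y ∈ σ j := by
    intro i j x y hx hy hxy
    rcases hrep i x hx with ⟨lx, hlx, hxeq⟩
    rcases hrep i y hy with ⟨ly, hly, hyeq⟩
    have hl : ∀ z ∈ lx ++ ly, ∃ ρ, (IsRay Δ ρ ∧ extR P '' ρ ⊆ τ i) ∧ z ∈ ρ :=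
      fun z hz => (List.mem_append.1 hz).elim (hlx z) (hly z)
    have hlτi : ∀ w ∈ (lx ++ ly).map (extR P), w ∈ τ i := by
      intro w hw
      rcases List.mem_map.1 hw with ⟨z, hz, rfl⟩
      rcases hl z hz with ⟨ρ, hρ, hzρ⟩
      exact hρ.2 ⟨z, hzρ, rfl⟩
    have hsum : ((lx ++ ly).map (extR P)).sum = extR P (x + y) := by
      rw [← map_list_sum (extR P), List.sum_append, ← hxeq, ← hyeq]
    have hω : IsFaceOf (τ i ∩ τ j) (τ i) := hΔtfan.1.2.2 (τ i) (hτΔt i) (τ j) (hτΔt j)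
    have hsumω : ((lx ++ ly).map (extR P)).sum ∈ τ i ∩ τ j := by
      constructor
      · exact (hΔtcone _ (hτΔt i)).list_sum hlτi
      · rw [hsum]; exact hPσ j _ hxy
    have hall := face_list_sum (hΔtcone _ (hτΔt i)) hω hlτi hsumω
    have hzσj : ∀ z ∈ lx ++ ly, z ∈ σ j := by
      intro z hz
      rcases hl z hz with ⟨ρ, ⟨hray, _⟩, hzρ⟩
      by_cases hz0 : z = 0
      · rw [hz0]; exact (hσcone j).1
      · have hρcone : IsCone ρ := (hΔ.1.1.2 ρ hray.1).isCone
        have hρsc : IsStrictlyConvexCone ρ := hΔ.2 ρ hray.1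
        have hPz : extR P z ∈ τ i ∩ τ j :=
          hall _ (List.mem_map_of_mem (f := extR P) hz)
        have hsub : extR P '' ρ ⊆ τ j := by
          rintro _ ⟨w, hwρ, rfl⟩
          rcases ray_struct hρcone hρsc hray.2 hzρ hz0 hwρ with ⟨t, ht, rfl⟩
          rw [map_smul]
          exact (hΔtcone _ (hτΔt j)).2.2 t ht _ hPz.2
        exact hraysub j ρ hray hsub hzρ
    constructor
    · rw [hxeq]
      exact (hσcone j).list_sum fun z hz => hzσj z (List.mem_append.2 (Or.inl hz))
    · rw [hyeq]
      exact (hσcone j).list_sum fun z hz => hzσj z (List.mem_append.2 (Or.inr hz))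
  -- every cone of Δ whose image lies in τ i is contained in σ i
  have hkey : ∀ s ∈ Δ, ∀ i : Fin r, extR P '' s ⊆ τ i → s ⊆ σ i := by
    intro s hs i hPs
    have hsc : IsStrictlyConvexCone s := hΔ.2 s hs
    rcases hΔ.1.1.2 s hs with ⟨g, hg⟩
    have himg : toR '' (↑g : Set (Fin n → ℤ)) = ↑(g.image toR) := (Finset.coe_image).symm
    have hsB : s = coneHull (↑(g.image toR) : Set (Fin n → ℝ)) := by rw [hg, himg]
    have hsc' : IsStrictlyConvexCone (coneHull (↑(g.image toR) : Set (Fin n → ℝ))) := by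
      rw [← hsB]; exact hsc
    rcases exists_ray_decomp' hsc' with ⟨T, hTeq, hTray⟩
    rw [hsB, hTeq]
    refine coneHull_min ?_ (hσcone i)
    intro v hv
    rcases hTray v hv with ⟨ρ, hface, hvρ, hrk⟩
    rw [← hsB] at hface
    have hρΔ : ρ ∈ Δ := hΔ.1.2.1 s hs ρ hface
    have hray : IsRay Δ ρ := ⟨hρΔ, hrk⟩
    have hρsub : extR P '' ρ ⊆ τ i := (Set.image_mono hface.2.1).trans hPs
    exact hraysub i ρ hray hρsub hvρ
  have hexistsτ : ∀ s ∈ Δ, ∃ i, extR P '' s ⊆ τ i := by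
    intro s hs
    rcases hPmap s hs with ⟨ω, hω, hsub⟩
    rcases hmaxsup ω hω with ⟨i, hsub2⟩
    exact ⟨i, hsub.trans hsub2⟩
  have hGoal3 : IsConeMap G Δ {κ | ∃ i, IsFaceOf κ (extR G '' σ i)} := by
    intro s hs
    rcases hexistsτ s hs with ⟨i, hPs⟩
    exact ⟨extR G '' σ i, ⟨i, IsFaceOf.refl' ((hσcone i).image _)⟩,
      Set.image_mono (hkey s hs i hPs)⟩
  -- the cones G^ℝ(σ i) and their generating sets
  have hgen : ∀ i, ∃ g : Finset (Fin n → ℤ), σ i = coneHull (toR '' ↑g) := by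
    intro i
    have hRsub : {ρ | IsRay Δ ρ ∧ extR P '' ρ ⊆ τ i} ⊆ Δ := fun ρ h => h.1.1
    have hRfin : {ρ | IsRay Δ ρ ∧ extR P '' ρ ⊆ τ i}.Finite := hΔ.1.1.1.subset hRsub
    rcases sUnion_ratcone_hull hRfin (fun ρ hρ => hΔ.1.1.2 ρ (hRsub hρ)) with ⟨g, hg⟩
    exact ⟨g, by rw [hσ i, hg]⟩
  choose gσ hgσ using hgen
  have hCgen : ∀ i, extR G '' σ i = coneHull (toR '' ↑((gσ i).image G)) := by
    intro i
    have himg : extR G '' (toR '' (↑(gσ i) : Set (Fin n → ℤ))) =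
        toR '' (↑((gσ i).image G) : Set (Fin k → ℤ)) := by
      ext w
      constructor
      · rintro ⟨_, ⟨v, hv, rfl⟩, rfl⟩
        exact ⟨G v, Finset.mem_coe.2 (Finset.mem_image.2 ⟨v, Finset.mem_coe.1 hv, rfl⟩),
          (extR_toR G v).symm⟩
      · rintro ⟨u, hu, rfl⟩
        rcases Finset.mem_image.1 (Finset.mem_coe.1 hu) with ⟨v, hv, rfl⟩
        exact ⟨toR v, ⟨v, Finset.mem_coe.2 hv, rfl⟩, extR_toR G v⟩
    rw [hgσ i, image_coneHull, himg]
  -- finiteness and rationality of the face system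
  have hΔbfin : {κ | ∃ i, IsFaceOf κ (extR G '' σ i)}.Finite := by
    have hsub : {κ | ∃ i, IsFaceOf κ (extR G '' σ i)} ⊆
        ⋃ i, (fun T => coneHull T) '' {T | T ⊆ toR '' ↑((gσ i).image G)} := by
      rintro κ ⟨i, hface⟩
      refine Set.mem_iUnion.2 ⟨i, ⟨toR '' ↑((gσ i).image G) ∩ κ, Set.inter_subset_left, ?_⟩⟩
      exact (face_coneHull_eq ((hCgen i) ▸ hface)).symm
    refine Set.Finite.subset (Set.finite_iUnion fun i => Set.Finite.image _ ?_) hsub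
    exact Set.Finite.finite_subsets (Set.toFinite _)
  have hΔbrat : ∀ κ ∈ {κ | ∃ i, IsFaceOf κ (extR G '' σ i)}, IsRatCone κ := by
    rintro κ ⟨i, hface⟩
    have hκeq := face_coneHull_eq ((hCgen i) ▸ hface)
    refine ⟨((gσ i).image G).filter (fun v => toR v ∈ κ), ?_⟩
    have himg : toR '' ↑((gσ i).image G) ∩ κ =
        toR '' ↑(((gσ i).image G).filter (fun v => toR v ∈ κ)) := by
      ext w
      constructor
      · rintro ⟨⟨v, hv, rfl⟩, hwκ⟩
        exact ⟨v, Finset.mem_coe.2 (Finset.mem_filter.2 ⟨Finset.mem_coe.1 hv, hwκ⟩), rfl⟩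
      · rintro ⟨v, hv, rfl⟩
        rcases Finset.mem_filter.1 (Finset.mem_coe.1 hv) with ⟨hvg, hvκ⟩
        exact ⟨⟨v, Finset.mem_coe.2 hvg, rfl⟩, hvκ⟩
    rw [himg] at hκeq
    exact hκeq
  have hCiΔb : ∀ i, extR G '' σ i ∈ {κ | ∃ i, IsFaceOf κ (extR G '' σ i)} :=
    fun i => ⟨i, IsFaceOf.refl' ((hσcone i).image _)⟩
  -- V facts
  have hVsub : ∀ j, (V : Set (Fin n → ℝ)) ⊆ σ j := by
    intro j x hx
    rw [hV] at hx
    exact Set.mem_iInter.1 hx.1 j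
  have hVmem : ∀ x, (∀ j, x ∈ σ j) → (∀ j, -x ∈ σ j) → x ∈ (V : Set (Fin n → ℝ)) := by
    intro x h1 h2
    rw [hV]
    exact ⟨Set.mem_iInter.2 h1, Set.mem_iInter.2 h2⟩
  have hVcone : IsCone (V : Set (Fin n → ℝ)) :=
    ⟨V.zero_mem, fun x hx y hy => V.add_mem hx hy, fun c _ x hx => V.smul_mem c hx⟩
  -- the real kernel of G is contained in V
  obtain ⟨sec, hsec⟩ := exists_section G hGsurj
  have hkerV : ∀ x : Fin n → ℝ, extR G x = 0 → x ∈ (V : Set (Fin n → ℝ)) := by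
    intro x hx
    set Nmap : (Fin n → ℤ) →ₗ[ℤ] (Fin n → ℤ) := LinearMap.id - sec.comp G with hNdef
    have hNx : extR Nmap x = x := by
      rw [hNdef, extR_sub_apply, extR_id_apply, extR_comp_apply, hx, map_zero, sub_zero]
    have hmem : ∀ j : Fin n, toR (Nmap (Pi.single j 1)) ∈ V := by
      intro j
      rw [← hGker]
      simp [hNdef, LinearMap.sub_apply, map_sub, hsec]
    rw [← hNx, extR_apply]
    exact V.sum_mem fun j _ => V.smul_mem _ (hmem j)
  -- V is contained in the real kernel of G (uses r > 0 via an index i0)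
  have hVker : ∀ i0 : Fin r, ∀ x ∈ (V : Set (Fin n → ℝ)), extR G x = 0 := by
    intro i0 x hx
    have hVface : IsFaceOf (V : Set (Fin n → ℝ)) (σ i0) := by
      refine ⟨hVcone, hVsub i0, ?_⟩
      intro x hx y hy hxy
      have h1 : ∀ j, x ∈ σ j ∧ y ∈ σ j := fun j => L1 i0 j x y hx hy (hVsub j hxy)
      have hnegmem : -(x + y) ∈ (V : Set (Fin n → ℝ)) := V.neg_mem hxy
      have h2 : ∀ j, -x ∈ σ j := by
        intro j
        have := (hσcone j).2.1 y (h1 j).2 (-(x + y)) (hVsub j hnegmem)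
        rwa [show y + -(x + y) = -x by abel] at this
      have h3 : ∀ j, -y ∈ σ j := by
        intro j
        have := (hσcone j).2.1 x (h1 j).1 (-(x + y)) (hVsub j hnegmem)
        rwa [show x + -(x + y) = -y by abel] at this
      exact ⟨hVmem x (fun j => (h1 j).1) h2, hVmem y (fun j => (h1 j).2) h3⟩
    have hVeq : (V : Set (Fin n → ℝ)) = coneHull (toR '' ↑(gσ i0) ∩ (V : Set (Fin n → ℝ))) :=
      face_coneHull_eq ((hgσ i0) ▸ hVface)
    have hkercone : IsCone {x : Fin n → ℝ | extR G x = 0} := by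
      refine ⟨by simp, ?_, ?_⟩
      · intro a ha b hb
        simp only [Set.mem_setOf_eq, map_add] at *
        rw [ha, hb, add_zero]
      · intro c _ a ha
        simp only [Set.mem_setOf_eq, map_smul] at *
        rw [ha, smul_zero]
    have hsub : coneHull (toR '' ↑(gσ i0) ∩ (V : Set (Fin n → ℝ))) ⊆
        {x : Fin n → ℝ | extR G x = 0} := by
      refine coneHull_min ?_ hkercone
      rintro _ ⟨⟨v, _, rfl⟩, hvV⟩
      show extR G (toR v) = 0
      rw [extR_toR, (hGker v).2 hvV, toR_zero]
    have := hVeq ▸ hx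
    exact hsub this
  -- strict convexity of the images
  have hCsc : ∀ i, IsStrictlyConvexCone (extR G '' σ i) := by
    rintro i u hu hnu
    rcases hu with ⟨x, hx, rfl⟩
    rcases hnu with ⟨y, hy, hyx⟩
    have hxy0 : extR G (x + y) = 0 := by rw [map_add, hyx, add_neg_cancel]
    have hxyV : x + y ∈ (V : Set (Fin n → ℝ)) := hkerV _ hxy0
    have hj : ∀ j, x ∈ σ j ∧ y ∈ σ j := fun j => L1 i j x y hx hy (hVsub j hxyV)
    have hnx : ∀ j, -x ∈ σ j := by
      intro j
      have := (hσcone j).2.1 y (hj j).2 (-(x + y)) (hVsub j (V.neg_mem hxyV))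
      rwa [show y + -(x + y) = -x by abel] at this
    exact hVker i x (hVmem x (fun j => (hj j).1) hnx)
  -- pairwise intersections of the images are faces
  have hCface : ∀ i j, IsFaceOf (extR G '' σ i ∩ extR G '' σ j) (extR G '' σ i) := by
    intro i j
    refine ⟨((hσcone i).image _).inter ((hσcone j).image _), Set.inter_subset_left, ?_⟩
    rintro _ ⟨x, hx, rfl⟩ _ ⟨y, hy, rfl⟩ ⟨_, z, hzσ, hzeq⟩
    have h0 : extR G (x + y - z) = 0 := by rw [map_sub, map_add, hzeq, sub_self]
    have hxyσj : x + y ∈ σ j := by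
      have := (hσcone j).2.1 z hzσ _ (hVsub j (hkerV _ h0))
      rwa [show z + (x + y - z) = x + y by abel] at this
    have hj := L1 i j x y hx hy hxyσj
    exact ⟨⟨⟨x, hx, rfl⟩, ⟨x, hj.1, rfl⟩⟩, ⟨⟨y, hy, rfl⟩, ⟨y, hj.2, rfl⟩⟩⟩
  -- no strict inclusions among the images
  have hσsub : ∀ i j : Fin r, extR G '' σ i ⊆ extR G '' σ j → σ i ⊆ σ j := by
    intro i j hsub x hx
    rcases hsub ⟨x, hx, rfl⟩ with ⟨z, hz, hzeq⟩
    have h0 : extR G (x - z) = 0 := by rw [map_sub, hzeq, sub_self]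
    have := (hσcone j).2.1 z hz _ (hVsub j (hkerV _ h0))
    rwa [show z + (x - z) = x by abel] at this
  have hCiCj : ∀ i j : Fin r, extR G '' σ i ⊆ extR G '' σ j →
      extR G '' σ i = extR G '' σ j := by
    intro i j hsub
    have hσij : σ i ⊆ σ j := hσsub i j hsub
    by_cases hττ : τ i = τ j
    · rw [show σ i = σ j by rw [hσ i, hσ j, hττ]]
    · exfalso
      have hfan'' : IsFan (Δt \ {τ i}) := by
        refine ⟨⟨⟨hΔtfan.1.1.1.subset Set.diff_subset, fun ω hω => hΔtfan.1.1.2 ω hω.1⟩,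
          ?_, ?_⟩, fun ω hω => hΔtfan.2 ω hω.1⟩
        · intro ω hω κ hf
          have hκΔt : κ ∈ Δt := hΔtfan.1.2.1 ω hω.1 κ hf
          refine ⟨hκΔt, ?_⟩
          intro hκτ
          rcases Set.mem_singleton_iff.1 hκτ with rfl
          exact hω.2 (Set.mem_singleton_iff.2 (hτmax i ω hω.1 hf.2.1).symm)
        · intro ω hω ω' hω'
          exact hΔtfan.1.2.2 ω hω.1 ω' hω'.1
      have hPmap'' : IsConeMap P Δ (Δt \ {τ i}) := by
        intro s hs
        rcases hexistsτ s hs with ⟨l, hl⟩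
        by_cases hlτ : τ l = τ i
        · have hsσi : s ⊆ σ i := hkey s hs i (hlτ ▸ hl)
          have hsub' : extR P '' s ⊆ τ j := by
            rintro _ ⟨x, hxs, rfl⟩
            exact hPσ j x (hσij (hsσi hxs))
          exact ⟨τ j, ⟨hτΔt j, fun h => hττ (Set.mem_singleton_iff.1 h).symm⟩, hsub'⟩
        · exact ⟨τ l, ⟨hτΔt l, fun h => hlτ (Set.mem_singleton_iff.1 h)⟩, hl⟩
      rcases huniv m P (Δt \ {τ i}) hfan'' hPmap'' hLP with ⟨Ft, hFtmap, hFteq⟩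
      have hFtid : Ft = LinearMap.id := by
        refine LinearMap.ext fun w => ?_
        rcases hPsurj w with ⟨v, rfl⟩
        exact (DFunLike.congr_fun hFteq v).symm
      rcases hFtmap (τ i) (hτΔt i) with ⟨ω, hω, hsub''⟩
      have hτiω : τ i ⊆ ω := by
        intro w hw
        have hFw : extR Ft w = w := by rw [hFtid, extR_id_apply]
        exact hFw ▸ hsub'' ⟨w, hw, rfl⟩
      exact hω.2 (Set.mem_singleton_iff.2 (hτmax i ω hω.1 hτiω).symm)
  -- assemble the results
  refine ⟨⟨⟨⟨hΔbfin, hΔbrat⟩, ?_, ?_⟩, ?_⟩, ?_, hGoal3⟩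
  · -- face closure
    rintro κ ⟨i, hface⟩ κ' hf
    exact ⟨i, hf.trans' hface⟩
  · -- intersections are faces
    rintro κ ⟨i, hface⟩ κ' ⟨j, hface'⟩
    refine faces_inter hface hface' (hCface i j) ?_
    rw [Set.inter_comm]
    exact hCface j i
  · -- strict convexity
    rintro κ ⟨i, hface⟩ x hx hnx
    exact hCsc i x (hface.2.1 hx) (hface.2.1 hnx)
  · -- maximal cones
    ext κ
    constructor
    · rintro ⟨⟨i, hface⟩, hmax⟩
      exact ⟨i, (hmax _ (hCiΔb i) hface.2.1).symm⟩
    · rintro ⟨i, rfl⟩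
      refine ⟨hCiΔb i, ?_⟩
      rintro t ⟨j, hfacej⟩ hsub
      have heq : extR G '' σ i = extR G '' σ j := hCiCj i j (hsub.trans hfacej.2.1)
      have hfj : t ⊆ extR G '' σ i := by rw [heq]; exact hfacej.2.1
      show extR G '' σ i = t
      exact Set.Subset.antisymm hsub hfj
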